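/- arXiv:2305.04304 — 2 statements merged into one kernel-verified Lean document; each statement's English description precedes it below -/
import Mathlib

section
/- Let p be prime, λ ∈ 𝔽_p^* and t ∈ 𝔽_p^*. If (h₁,h₂) is a nonzero integer vector with h₁ + h₂·t ≡ 0 (mod p) minimizing |h₁h₂| over such solutions for t, and (k₁,k₂) is a nonzero integer vector with k₁ + k₂·λt ≡ 0 (mod p) minimizing |k₁k₂| for λt, then h₂k₁ − h₁k₂λ ≡ 0 (mod p) and consequently ρ₂(λ,p) ≤ ρ₂(λt,p)·ρ₂(t,p), where ρ₂(μ,p) denotes the minimum of max(|h₁|,1)·max(|h₂|,1) over nonzero integer vectors (h₁,h₂) with h₁ + h₂μ ≡ 0 (mod p). -/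
/-!
Eliminating `t` between the two congruences `h₁ + h₂ t ≡ 0` and `k₁ + k₂ λ t ≡ 0` shows that
`(h₂ k₁, -h₁ k₂)` solves `x + y λ ≡ 0`, and its weight is at most the product of the weights of
`h` and `k`. It is a nonzero vector because a minimal solution for a unit `μ` has both
coordinates nonzero: the trivial solution `(-(μ mod p), 1)` has weight `< p`, whereas a nonzero
solution with a vanishing coordinate has its other coordinate divisible by `p`.
-/

noncomputable def rho2 (p : ℕ) (μ : ℤ) : ℕ :=
  sInf {n : ℕ | ∃ h₁ h₂ : ℤ, ¬(h₁ = 0 ∧ h₂ = 0) ∧ (p : ℤ) ∣ h₁ + h₂ * μ ∧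
    (n : ℤ) = max |h₁| 1 * max |h₂| 1}

lemma max_abs_mul_one_le (a b : ℤ) : max |a * b| 1 ≤ max |a| 1 * max |b| 1 := by
  rw [abs_mul]
  exact max_le (mul_le_mul (le_max_left _ _) (le_max_left _ _) (abs_nonneg _) (by positivity))
    (one_le_mul_of_one_le_of_one_le (le_max_right _ _) (le_max_right _ _))

lemma rho2_le {p : ℕ} {μ a b : ℤ} (hab : ¬(a = 0 ∧ b = 0)) (hd : (p : ℤ) ∣ a + b * μ) :
    (rho2 p μ : ℤ) ≤ max |a| 1 * max |b| 1 := by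
  have hw : 0 ≤ max |a| 1 * max |b| 1 := by positivity
  have : rho2 p μ ≤ (max |a| 1 * max |b| 1).toNat :=
    Nat.sInf_le ⟨a, b, hab, hd, Int.toNat_of_nonneg hw⟩
  rw [← Int.toNat_of_nonneg hw]
  exact_mod_cast this

lemma rho2_lt {p : ℕ} (hp : 0 < p) {μ : ℤ} (hμ : ¬(p : ℤ) ∣ μ) : (rho2 p μ : ℤ) < p := by
  have hp' : (0 : ℤ) < p := by exact_mod_cast hp
  have hpos : 0 < μ % p :=
    (Int.emod_nonneg μ hp'.ne').lt_of_ne' fun h => hμ (Int.dvd_of_emod_eq_zero h)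
  have hd : (p : ℤ) ∣ -(μ % p) + 1 * μ := by
    simpa only [one_mul, neg_add_eq_sub] using Int.dvd_self_sub_emod
  calc (rho2 p μ : ℤ) ≤ max |-(μ % p)| 1 * max |1| 1 := rho2_le (by simp) hd
    _ = μ % p := by rw [abs_neg, abs_of_pos hpos, max_eq_left hpos, abs_one, max_self, mul_one]
    _ < p := Int.emod_lt_of_pos μ hp'

lemma le_max_abs_one_of_dvd {p x : ℤ} (hx : x ≠ 0) (hd : p ∣ x) : p ≤ max |x| 1 :=
  (Int.le_of_dvd (abs_pos.mpr hx) ((dvd_abs _ _).mpr hd)).trans (le_max_left _ _)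

lemma ne_zero_and_ne_zero_of_weight_lt {p : ℕ} (hp : p.Prime) {μ a b : ℤ}
    (hμ : ¬(p : ℤ) ∣ μ) (hab : ¬(a = 0 ∧ b = 0)) (hd : (p : ℤ) ∣ a + b * μ)
    (hlt : max |a| 1 * max |b| 1 < p) : a ≠ 0 ∧ b ≠ 0 := by
  constructor
  · rintro rfl
    have hb : b ≠ 0 := fun hb => hab ⟨rfl, hb⟩
    have hpb : (p : ℤ) ∣ b :=
      ((Nat.prime_iff_prime_int.mp hp).dvd_or_dvd (by simpa using hd)).resolve_right hμ
    have := le_max_abs_one_of_dvd hb hpb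
    simp only [abs_zero, zero_le_one, max_eq_right, one_mul] at hlt
    omega
  · rintro rfl
    have ha : a ≠ 0 := fun ha => hab ⟨ha, rfl⟩
    have := le_max_abs_one_of_dvd ha (by simpa using hd)
    simp only [abs_zero, zero_le_one, max_eq_right, mul_one] at hlt
    omega

theorem rho2_submultiplicative (p : ℕ) (hp : p.Prime) (lam t : ℤ)
    (hlam : ¬ (p : ℤ) ∣ lam) (ht : ¬ (p : ℤ) ∣ t)
    (h₁ h₂ k₁ k₂ : ℤ)
    (hh0 : ¬(h₁ = 0 ∧ h₂ = 0)) (hh : (p : ℤ) ∣ h₁ + h₂ * t)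
    (hhmin : max |h₁| 1 * max |h₂| 1 = (rho2 p t : ℤ))
    (hk0 : ¬(k₁ = 0 ∧ k₂ = 0)) (hk : (p : ℤ) ∣ k₁ + k₂ * (lam * t))
    (hkmin : max |k₁| 1 * max |k₂| 1 = (rho2 p (lam * t) : ℤ)) :
    (p : ℤ) ∣ h₂ * k₁ - h₁ * k₂ * lam ∧ rho2 p lam ≤ rho2 p (lam * t) * rho2 p t := by
  have hdvd : (p : ℤ) ∣ h₂ * k₁ - h₁ * k₂ * lam := by
    rw [show h₂ * k₁ - h₁ * k₂ * lam =
      h₂ * (k₁ + k₂ * (lam * t)) - k₂ * lam * (h₁ + h₂ * t) by ring]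
    exact dvd_sub (hk.mul_left h₂) (hh.mul_left (k₂ * lam))
  have hlamt : ¬(p : ℤ) ∣ lam * t := (Nat.prime_iff_prime_int.mp hp).not_dvd_mul hlam ht
  have hh₂ : h₂ ≠ 0 := (ne_zero_and_ne_zero_of_weight_lt hp ht hh0 hh
    (hhmin ▸ rho2_lt hp.pos ht)).2
  have hk₁ : k₁ ≠ 0 := (ne_zero_and_ne_zero_of_weight_lt hp hlamt hk0 hk
    (hkmin ▸ rho2_lt hp.pos hlamt)).1
  refine ⟨hdvd, ?_⟩
  have hsol : (p : ℤ) ∣ h₂ * k₁ + -(h₁ * k₂) * lam := by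
    simpa only [neg_mul, ← sub_eq_add_neg] using hdvd
  suffices (rho2 p lam : ℤ) ≤ rho2 p (lam * t) * rho2 p t by exact_mod_cast this
  calc (rho2 p lam : ℤ) ≤ max |h₂ * k₁| 1 * max |-(h₁ * k₂)| 1 :=
        rho2_le (fun h => mul_ne_zero hh₂ hk₁ h.1) hsol
    _ ≤ (max |h₂| 1 * max |k₁| 1) * (max |h₁| 1 * max |k₂| 1) := by
        rw [abs_neg]
        gcongr <;> exact max_abs_mul_one_le _ _
    _ = rho2 p (lam * t) * rho2 p t := by rw [← hhmin, ← hkmin]; ring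
end

section
/- Let D, R ≥ 2 be real numbers and let E(D,R) be the set of primes p for which there exists λ ∈ 𝔽_p^* of multiplicative order d with 3 ≤ d < D and ρ₂(λ,p) < R, where ρ₂(λ,p) is the minimum of max(|h₁|,1)·max(|h₂|,1) over nonzero (h₁,h₂) ∈ ℤ² with h₁ + h₂λ ≡ 0 (mod p). Then #E(D,R) ≪ D²R(log R)²/log D. -/
/-!
Let `λ` have order `d ≥ 3` and let `(a, b)` realise `ρ₂(λ, p) ≤ R`. If `p ∣ b` then also `p ∣ a`,
so `p ≤ R`. Otherwise `a ≡ -bλ` gives `p ∣ a^d - (-b)^d`, and this integer is nonzero because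
`a = ±b` would force `λ = ∓1`. Since `|a^d - (-b)^d| ≤ R^(d+1)`, it has at most
`(D + 1) log R / log (D + 1)` prime factors exceeding `D`, and there are `O(D · R log R)` triples
`(d, a, b)`; the remaining primes are at most `R + D`.
-/

open Finset

theorem exists_rho2_eq {p : ℕ} (hp : p ≠ 0) (μ : ℤ) :
    ∃ a b : ℤ, ¬(a = 0 ∧ b = 0) ∧ (p : ℤ) ∣ a + b * μ ∧
      (rho2 p μ : ℤ) = max |a| 1 * max |b| 1 := by
  refine Nat.sInf_mem (s := {n : ℕ | ∃ a b : ℤ, ¬(a = 0 ∧ b = 0) ∧ (p : ℤ) ∣ a + b * μ ∧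
    (n : ℤ) = max |a| 1 * max |b| 1}) ⟨p, p, 0, by simp [hp], by simp, ?_⟩
  have : (1 : ℤ) ≤ p := by exact_mod_cast Nat.one_le_iff_ne_zero.mpr hp
  simp [this]

theorem pow_eq_neg_pow_of_add_mul_eq_zero {K : Type*} [CommRing K] {a b lam : K} {n : ℕ}
    (h : a + b * lam = 0) (hn : lam ^ n = 1) : a ^ n = (-b) ^ n := by
  rw [eq_neg_of_add_eq_zero_left h, neg_mul_eq_neg_mul, mul_pow, hn, mul_one]

theorem pow_sub_neg_pow_ne_zero {K : Type*} [CommRing K] [IsDomain K] {lam : K}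
    (hlam : 3 ≤ orderOf lam) {a b : ℤ} (hb : (b : K) ≠ 0) (h : (a : K) + b * lam = 0) :
    a ^ orderOf lam - (-b) ^ orderOf lam ≠ 0 := by
  rw [sub_ne_zero, Ne, pow_eq_pow_iff_of_ne_zero (by omega)]
  rintro (rfl | ⟨rfl, -⟩)
  · have : lam = 1 := by
      have : (b : K) * (lam - 1) = 0 := by push_cast at h; linear_combination h
      simpa [hb, sub_eq_zero] using this
    simp [this] at hlam
  · have : lam = -1 := by
      have : (b : K) * (lam + 1) = 0 := by push_cast at h; linear_combination h
      simpa [hb, add_eq_zero_iff_eq_neg] using this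
    have := orderOf_le_of_pow_eq_one two_pos (by simp [this] : lam ^ 2 = 1)
    omega

noncomputable def hyperbolicPairs (z : ℕ) : Finset (ℤ × ℤ) :=
  {q ∈ Icc (-z : ℤ) z ×ˢ Icc (-z : ℤ) z | max |q.1| 1 * max |q.2| 1 ≤ z}

theorem abs_le_of_mem_hyperbolicPairs {z : ℕ} {q : ℤ × ℤ} (hq : q ∈ hyperbolicPairs z) :
    |q.1| ≤ z ∧ |q.2| ≤ z := by
  simp only [hyperbolicPairs, mem_filter, mem_product, mem_Icc] at hq
  exact ⟨abs_le.mpr hq.1.1, abs_le.mpr hq.1.2⟩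

theorem mem_hyperbolicPairs {z : ℕ} {a b : ℤ} (h : max |a| 1 * max |b| 1 ≤ z) :
    (a, b) ∈ hyperbolicPairs z := by
  have ha : |a| ≤ z := (le_max_left _ _).trans <| (le_mul_of_one_le_right (by positivity)
    (le_max_right _ _)).trans h
  have hb : |b| ≤ z := (le_max_left _ _).trans <| (le_mul_of_one_le_left (by positivity)
    (le_max_right _ _)).trans h
  simp only [hyperbolicPairs, mem_filter, mem_product, mem_Icc]
  exact ⟨⟨abs_le.mp ha, abs_le.mp hb⟩, h⟩

/-- The pairs with `|a| = j` have `|b| ≤ z / max j 1`. -/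
theorem card_hyperbolicPairs_le_sum (z : ℕ) :
    #(hyperbolicPairs z) ≤ ∑ j ∈ range (z + 1), 2 * (2 * (z / max j 1) + 1) := by
  let fiber (j : ℕ) : Finset (ℤ × ℤ) :=
    {(j : ℤ), -(j : ℤ)} ×ˢ Icc (-(z / max j 1 : ℕ) : ℤ) (z / max j 1 : ℕ)
  have hsub : hyperbolicPairs z ⊆ (range (z + 1)).biUnion fiber := by
    rintro ⟨a, b⟩ hab
    have ha : |a| ≤ z := (abs_le_of_mem_hyperbolicPairs hab).1
    simp only [hyperbolicPairs, mem_filter] at hab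
    rw [Int.abs_eq_natAbs] at ha
    refine mem_biUnion.mpr ⟨a.natAbs, mem_range.mpr (by omega), mem_product.mpr ⟨?_, ?_⟩⟩
    · rcases abs_choice a with h | h <;> simp [h]
    · have key : max b.natAbs 1 * max a.natAbs 1 ≤ z := by
        have := hab.2
        simp only [Int.abs_eq_natAbs] at this
        rw [mul_comm]; exact_mod_cast this
      have := (Nat.le_div_iff_mul_le (by omega)).mpr key
      rw [mem_Icc, ← abs_le, Int.abs_eq_natAbs]
      exact_mod_cast (le_max_left _ _).trans this
  have hfiber (j : ℕ) : #(fiber j) ≤ 2 * (2 * (z / max j 1) + 1) := by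
    rw [card_product, Int.card_Icc]
    refine Nat.mul_le_mul (card_le_two) (le_of_eq ?_)
    omega
  exact (card_le_card hsub).trans (card_biUnion_le.trans (sum_le_sum fun j _ => hfiber j))

theorem sum_range_div_max_one_le (z : ℕ) :
    ∑ j ∈ range (z + 1), ((z / max j 1 : ℕ) : ℝ) ≤ z * (2 + Real.log z) := by
  have hterm (i : ℕ) : ((z / max (i + 1) 1 : ℕ) : ℝ) ≤ z * ((i + 1 : ℕ) : ℝ)⁻¹ := by
    rw [max_eq_left (by omega)]
    exact Nat.cast_div_le.trans_eq (div_eq_mul_inv _ _)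
  calc ∑ j ∈ range (z + 1), ((z / max j 1 : ℕ) : ℝ)
      ≤ ∑ i ∈ range z, z * ((i + 1 : ℕ) : ℝ)⁻¹ + z := by
        rw [sum_range_succ']
        gcongr with i
        · exact hterm i
        · simp
    _ = z * harmonic z + z := by simp [harmonic, ← mul_sum]
    _ ≤ z * (1 + Real.log z) + z := by gcongr; exact harmonic_le_one_add_log z
    _ = z * (2 + Real.log z) := by ring

theorem card_hyperbolicPairs_le {z : ℕ} (hz : 2 ≤ z) :
    (#(hyperbolicPairs z) : ℝ) ≤ 20 * z * Real.log z := by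
  have hsum : (#(hyperbolicPairs z) : ℝ) ≤ 4 * (z * (2 + Real.log z)) + 2 * (z + 1) :=
    calc (#(hyperbolicPairs z) : ℝ)
        ≤ ∑ j ∈ range (z + 1), 2 * (2 * ((z / max j 1 : ℕ) : ℝ) + 1) := by
          exact_mod_cast card_hyperbolicPairs_le_sum z
      _ = 4 * ∑ j ∈ range (z + 1), ((z / max j 1 : ℕ) : ℝ) + 2 * (z + 1) := by
          rw [← mul_sum, sum_add_distrib, ← mul_sum, sum_const, card_range, nsmul_one]
          push_cast
          ring
      _ ≤ _ := by gcongr; exact sum_range_div_max_one_le z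
  have hz' : (2 : ℝ) ≤ z := by exact_mod_cast hz
  have hlog : (0.69 : ℝ) ≤ Real.log z :=
    (Real.log_two_gt_d9.le.trans' (by norm_num)).trans (Real.log_le_log (by norm_num) hz')
  nlinarith

def largePrimeFactors (n m : ℕ) : Finset ℕ := {q ∈ m.primeFactors | n < q}

theorem pow_card_largePrimeFactors_le (n : ℕ) {m : ℕ} (hm : m ≠ 0) :
    (n + 1) ^ #(largePrimeFactors n m) ≤ m :=
  calc (n + 1) ^ #(largePrimeFactors n m)
      ≤ ∏ q ∈ largePrimeFactors n m, q := pow_card_le_prod _ _ _ fun _ hq => (mem_filter.mp hq).2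
    _ ≤ ∏ q ∈ m.primeFactors, q := prod_le_prod_of_subset_of_one_le' (filter_subset _ _)
        fun _ hq _ => (Nat.prime_of_mem_primeFactors hq).one_le
    _ ≤ m := Nat.le_of_dvd (Nat.pos_of_ne_zero hm) (Nat.prod_primeFactors_dvd m)

theorem natAbs_pow_sub_neg_pow_le {z : ℕ} (hz : 2 ≤ z) {a b : ℤ} (ha : |a| ≤ z) (hb : |b| ≤ z)
    (d : ℕ) : (a ^ d - (-b) ^ d).natAbs ≤ z ^ (d + 1) := by
  zify
  calc |a ^ d - (-b) ^ d| ≤ |a| ^ d + |b| ^ d := by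
        simpa only [abs_pow, abs_neg] using abs_sub (a ^ d) ((-b) ^ d)
    _ ≤ z ^ d + z ^ d := by gcongr
    _ ≤ z ^ (d + 1) := by
        rw [pow_succ, ← two_mul, mul_comm]
        gcongr
        exact_mod_cast hz

theorem card_largePrimeFactors_pow_sub_neg_pow_le {n z d : ℕ} (hz : 2 ≤ z) (hd : d ≤ n)
    {a b : ℤ} (ha : |a| ≤ z) (hb : |b| ≤ z) :
    #(largePrimeFactors n (a ^ d - (-b) ^ d).natAbs) * Real.log (n + 1)
      ≤ (n + 1) * Real.log z := by
  set m := (a ^ d - (-b) ^ d).natAbs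
  rcases eq_or_ne m 0 with hm | hm
  · simp only [hm, largePrimeFactors, Nat.primeFactors_zero, filter_empty, card_empty,
      Nat.cast_zero, zero_mul]
    positivity
  have hpow : (n + 1) ^ #(largePrimeFactors n m) ≤ z ^ (n + 1) :=
    (pow_card_largePrimeFactors_le n hm).trans <|
      (natAbs_pow_sub_neg_pow_le hz ha hb d).trans (Nat.pow_le_pow_right (by omega) (by omega))
  have hpow' : ((n + 1 : ℕ) : ℝ) ^ #(largePrimeFactors n m) ≤ (z : ℝ) ^ (n + 1) := by
    exact_mod_cast hpow
  simpa [Real.log_pow] using Real.log_le_log (by positivity) hpow'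

noncomputable def exceptionalCandidates (n z : ℕ) : Finset ℕ :=
  range (z + n + 1) ∪ (Icc 3 n ×ˢ hyperbolicPairs z).biUnion fun t =>
    largePrimeFactors n (t.2.1 ^ t.1 - (-t.2.2) ^ t.1).natAbs

theorem mem_exceptionalCandidates {n z p : ℕ} [Fact p.Prime] {lam : ZMod p}
    (hd : 3 ≤ orderOf lam) (hdn : orderOf lam ≤ n) (hrho : rho2 p lam.val ≤ z) :
    p ∈ exceptionalCandidates n z := by
  obtain ⟨a, b, hab, hdvd, hval⟩ := exists_rho2_eq (Fact.out : p.Prime).ne_zero lam.val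
  have hpair : (a, b) ∈ hyperbolicPairs z := mem_hyperbolicPairs (hval ▸ by exact_mod_cast hrho)
  obtain ⟨ha, hb⟩ : |a| ≤ z ∧ |b| ≤ z := abs_le_of_mem_hyperbolicPairs hpair
  have hzero : (a : ZMod p) + b * lam = 0 := by
    simpa using (ZMod.intCast_zmod_eq_zero_iff_dvd _ p).mpr hdvd
  simp only [exceptionalCandidates, mem_union, mem_range, mem_biUnion, mem_product, mem_Icc]
  by_cases hbp : (b : ZMod p) = 0
  · have hap : (a : ZMod p) = 0 := by simpa [hbp] using hzero
    rw [ZMod.intCast_zmod_eq_zero_iff_dvd] at hap hbp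
    left
    by_cases ha0 : a = 0
    · have := Int.le_of_dvd (abs_pos.mpr fun hb0 => hab ⟨ha0, hb0⟩) ((dvd_abs _ _).mpr hbp)
      omega
    · have := Int.le_of_dvd (abs_pos.mpr ha0) ((dvd_abs _ _).mpr hap)
      omega
  by_cases hpn : p ≤ n
  · left; omega
  right
  refine ⟨(orderOf lam, a, b), ⟨⟨hd, hdn⟩, hpair⟩, mem_filter.mpr ⟨?_, by omega⟩⟩
  refine Nat.mem_primeFactors.mpr ⟨Fact.out, ?_, Int.natAbs_ne_zero.mpr ?_⟩
  · rw [← Int.natCast_dvd, ← ZMod.intCast_zmod_eq_zero_iff_dvd]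
    push_cast
    rw [sub_eq_zero]
    exact pow_eq_neg_pow_of_add_mul_eq_zero hzero (pow_orderOf_eq_one lam)
  · exact pow_sub_neg_pow_ne_zero hd hbp hzero

theorem card_exceptionalCandidates_le {n z : ℕ} (hz : 2 ≤ z) :
    (#(exceptionalCandidates n z) : ℝ)
      ≤ z + n + 1 + n * (20 * z * Real.log z) * ((n + 1) * Real.log z / Real.log (n + 1)) := by
  set T := Icc 3 n ×ˢ hyperbolicPairs z
  set B := (n + 1) * Real.log z / Real.log (n + 1)
  have hfiber : ∀ t ∈ T,
      (#(largePrimeFactors n (t.2.1 ^ t.1 - (-t.2.2) ^ t.1).natAbs) : ℝ) ≤ B := by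
    rintro ⟨d, a, b⟩ ht
    obtain ⟨hd, hpair⟩ := mem_product.mp ht
    obtain ⟨hd3, hdn⟩ := mem_Icc.mp hd
    obtain ⟨ha, hb⟩ := abs_le_of_mem_hyperbolicPairs hpair
    rw [le_div_iff₀ (Real.log_pos (by norm_cast; omega))]
    exact card_largePrimeFactors_pow_sub_neg_pow_le hz hdn ha hb
  have hT : (#T : ℝ) ≤ n * (20 * z * Real.log z) := by
    rw [card_product, Nat.card_Icc, Nat.cast_mul]
    gcongr
    · omega
    · exact card_hyperbolicPairs_le hz
  calc (#(exceptionalCandidates n z) : ℝ)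
      ≤ #(range (z + n + 1)) + ∑ t ∈ T,
          (#(largePrimeFactors n (t.2.1 ^ t.1 - (-t.2.2) ^ t.1).natAbs) : ℝ) := by
        exact_mod_cast (card_union_le _ _).trans (add_le_add_right card_biUnion_le _)
    _ ≤ z + n + 1 + #T * B := by
        rw [card_range]
        push_cast
        gcongr
        simpa using sum_le_card_nsmul T _ B hfiber
    _ ≤ z + n + 1 + n * (20 * z * Real.log z) * B := by
        gcongr
        exact div_nonneg (by positivity) (Real.log_nonneg (by linarith))

theorem card_exceptionalCandidates_floor_le {D R : ℝ} (hD : 2 ≤ D) (hR : 2 ≤ R) :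
    (#(exceptionalCandidates ⌊D⌋₊ ⌊R⌋₊) : ℝ) ≤ 45 * D ^ 2 * R * Real.log R ^ 2 / Real.log D := by
  set n := ⌊D⌋₊
  set z := ⌊R⌋₊
  have hnD : (n : ℝ) ≤ D := Nat.floor_le (by linarith)
  have hDn : D < n + 1 := Nat.lt_floor_add_one D
  have hzR : (z : ℝ) ≤ R := Nat.floor_le (by linarith)
  have hz : 2 ≤ z := Nat.le_floor (by exact_mod_cast hR)
  have hlogD : 0 < Real.log D := Real.log_pos (by linarith)
  have hlogR : 0.69 ≤ Real.log R :=
    (Real.log_two_gt_d9.le.trans' (by norm_num)).trans (Real.log_le_log (by norm_num) hR)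
  have hlogz : Real.log z ≤ Real.log R := Real.log_le_log (by norm_cast; omega) hzR
  have hlog_small : Real.log D ≤ D := (Real.log_le_sub_one_of_pos (by linarith)).trans (by linarith)
  have hlog_n : 0 ≤ Real.log (n + 1) := Real.log_nonneg (by linarith)
  calc (#(exceptionalCandidates n z) : ℝ)
      ≤ z + n + 1 + n * (20 * z * Real.log z) * ((n + 1) * Real.log z / Real.log (n + 1)) :=
        card_exceptionalCandidates_le hz
    _ ≤ R + D + 1 + D * (20 * R * Real.log R) * (2 * D * Real.log R / Real.log D) := by
        gcongr
        linarith
    _ = R + D + 1 + 40 * (D ^ 2 * R * Real.log R ^ 2 / Real.log D) := by ring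
    _ ≤ 5 * (D ^ 2 * R * Real.log R ^ 2 / Real.log D)
          + 40 * (D ^ 2 * R * Real.log R ^ 2 / Real.log D) := by
        gcongr
        rw [mul_div_assoc', le_div_iff₀ hlogD]
        have hsq : 0.47 ≤ Real.log R ^ 2 := by nlinarith
        calc (R + D + 1) * Real.log D ≤ (2 * D * R) * D := by gcongr; nlinarith
          _ ≤ 5 * (D ^ 2 * R * 0.47) := by nlinarith
          _ ≤ 5 * (D ^ 2 * R * Real.log R ^ 2) := by gcongr
    _ = 45 * D ^ 2 * R * Real.log R ^ 2 / Real.log D := by ring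

theorem card_exceptional_primes_bound :
    ∃ C > (0 : ℝ), ∀ D R : ℝ, 2 ≤ D → 2 ≤ R →
      (Nat.card {p : ℕ // p.Prime ∧ ∃ lam : (ZMod p)ˣ,
          3 ≤ orderOf lam ∧ (orderOf lam : ℝ) < D ∧
          (rho2 p (((lam : ZMod p).val : ℤ)) : ℝ) < R} : ℝ)
        ≤ C * D ^ 2 * R * (Real.log R) ^ 2 / Real.log D := by
  refine ⟨45, by norm_num, fun D R hD hR => ?_⟩
  have hsub : {p : ℕ | p.Prime ∧ ∃ lam : (ZMod p)ˣ, 3 ≤ orderOf lam ∧ (orderOf lam : ℝ) < D ∧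
      (rho2 p (((lam : ZMod p).val : ℤ)) : ℝ) < R} ⊆ exceptionalCandidates ⌊D⌋₊ ⌊R⌋₊ := by
    rintro p ⟨hp, lam, hd, hdD, hrho⟩
    have : Fact p.Prime := ⟨hp⟩
    rw [← orderOf_units] at hd hdD
    exact mem_exceptionalCandidates hd (Nat.le_floor hdD.le) (Nat.le_floor hrho.le)
  calc (Nat.card _ : ℝ) ≤ #(exceptionalCandidates ⌊D⌋₊ ⌊R⌋₊) := by
        exact_mod_cast (Set.ncard_le_ncard hsub (finite_toSet _)).trans_eq (Set.ncard_coe_finset _)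
    _ ≤ _ := card_exceptionalCandidates_floor_le hD hR
end
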